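/- If n = p^k for a prime p and positive integer k, then G_UZ(Z_n) is the complete bipartite graph K_{a,b} with a = p^{k−1} (the size of the ideal generated by p) and b = p^{k−1}(p−1) = φ(n) (the number of units). -/

import Mathlib

/-! `ZMod (p ^ k)` is a finite local ring whose maximal ideal, the set of nonunits, is `(p)`.
In a finite ring the zero divisors are exactly the nonunits, so `u * v` is a zero divisor iff
`u` or `v` lies in the maximal ideal; if `u` does, then `u + v` is a unit iff `v` does not.
The counts follow from `|(ZMod (p ^ k))ˣ| = φ (p ^ k) = p ^ (k - 1) * (p - 1)`, the ideal being
the complement of the units. -/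

open SimpleGraph

/-- The unit-zero divisor graph of a commutative ring: distinct `u`, `v` are adjacent
iff `u + v` is a unit and `u * v` is a zero divisor. -/
def GUZ (R : Type*) [CommRing R] : SimpleGraph R where
  Adj u v := u ≠ v ∧ IsUnit (u + v) ∧ ∃ y : R, y ≠ 0 ∧ u * v * y = 0
  symm := by
    constructor
    intro u v h
    refine ⟨h.1.symm, ?_, ?_⟩
    · rw [add_comm]; exact h.2.1
    · rw [mul_comm]; exact h.2.2
  loopless := by constructor; intro u h; exact h.1 rfl

open IsLocalRing

theorem Set.ncard_setOf_isUnit (M : Type*) [Monoid M] :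
    {x : M | IsUnit x}.ncard = Nat.card Mˣ :=
  Set.ncard_range_of_injective Units.val_injective

section LocalRing

variable {R : Type*} [CommRing R] [IsLocalRing R]

theorem IsLocalRing.ncard_maximalIdeal_add_card_units [Finite R] :
    (maximalIdeal R : Set R).ncard + Nat.card Rˣ = Nat.card R := by
  rw [← Set.ncard_setOf_isUnit, add_comm]
  exact Set.ncard_add_ncard_compl _

theorem IsLocalRing.isUnit_add_of_mem_of_notMem {u v : R} (hu : u ∈ maximalIdeal R)
    (hv : v ∉ maximalIdeal R) : IsUnit (u + v) := by
  rw [← notMem_maximalIdeal]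
  intro huv
  exact hv (by simpa using sub_mem huv hu)

theorem exists_ne_zero_mul_eq_zero_iff_not_isUnit {A : Type*} [CommRing A] [Finite A] {a : A} :
    (∃ y, y ≠ 0 ∧ a * y = 0) ↔ ¬IsUnit a := by
  rw [IsArtinianRing.isUnit_iff_mem_nonZeroDivisors, mem_nonZeroDivisors_iff_left]
  simp only [not_forall, exists_prop, and_comm]

theorem GUZ_adj_iff [Finite R] {u v : R} :
    (GUZ R).Adj u v ↔
      (u ∈ maximalIdeal R ∧ v ∉ maximalIdeal R) ∨
        (u ∉ maximalIdeal R ∧ v ∈ maximalIdeal R) := by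
  have hprod : ¬IsUnit (u * v) ↔ u ∈ maximalIdeal R ∨ v ∈ maximalIdeal R := by
    rw [IsUnit.mul_iff, ← notMem_maximalIdeal, ← notMem_maximalIdeal]
    tauto
  change u ≠ v ∧ IsUnit (u + v) ∧ (∃ y, y ≠ 0 ∧ u * v * y = 0) ↔ _
  rw [exists_ne_zero_mul_eq_zero_iff_not_isUnit, hprod]
  constructor
  · rintro ⟨-, hsum, hmem⟩
    have : ¬(u ∈ maximalIdeal R ∧ v ∈ maximalIdeal R) := fun h =>
      notMem_maximalIdeal.mpr hsum (add_mem h.1 h.2)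
    tauto
  · rintro (⟨hu, hv⟩ | ⟨hu, hv⟩)
    · exact ⟨fun h => hv (h ▸ hu), isUnit_add_of_mem_of_notMem hu hv, .inl hu⟩
    · refine ⟨fun h => hu (h ▸ hv), ?_, .inr hv⟩
      exact add_comm v u ▸ isUnit_add_of_mem_of_notMem hv hu

end LocalRing

namespace ZMod

variable {p k : ℕ} [Fact p.Prime]

theorem mem_span_prime_iff_not_isUnit (hk : k ≠ 0) {x : ZMod (p ^ k)} :
    x ∈ Ideal.span {(p : ZMod (p ^ k))} ↔ ¬IsUnit x := by
  have hp := Fact.out (p := p.Prime)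
  rw [Ideal.mem_span_singleton]
  constructor
  · rintro ⟨c, rfl⟩ hunit
    exact (isUnit_prime_iff_not_dvd hp).mp (isUnit_of_mul_isUnit_left hunit) (dvd_pow_self p hk)
  · intro hx
    rw [← natCast_zmod_val x, isUnit_iff_coprime,
      Nat.coprime_pow_right_iff (Nat.pos_of_ne_zero hk), Nat.coprime_comm,
      hp.coprime_iff_not_dvd, not_not] at hx
    obtain ⟨m, hm⟩ := hx
    exact ⟨m, by rw [← natCast_zmod_val x, hm, Nat.cast_mul]⟩

instance isLocalRing_prime_pow [NeZero k] : IsLocalRing (ZMod (p ^ k)) :=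
  have : Nontrivial (ZMod (p ^ k)) := nontrivial_iff.mpr <|
    Nat.pow_eq_one.not.mpr (by simp [(Fact.out : p.Prime).ne_one, NeZero.ne k])
  .of_nonunits_add fun a b ha hb => by
    rw [mem_nonunits_iff, ← mem_span_prime_iff_not_isUnit (NeZero.ne k)] at *
    exact add_mem ha hb

theorem maximalIdeal_prime_pow [NeZero k] :
    maximalIdeal (ZMod (p ^ k)) = Ideal.span {(p : ZMod (p ^ k))} := by
  ext x
  rw [mem_span_prime_iff_not_isUnit (NeZero.ne k), mem_maximalIdeal, mem_nonunits_iff]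

end ZMod

/-- If `n = p ^ k` for a prime `p` and `k ≥ 1`, then `G_UZ(ℤ_n)` is the complete
bipartite graph with parts the ideal generated by `p`, of size `p ^ (k - 1)`, and the
units, of number `p ^ (k - 1) * (p - 1) = φ(n)`. -/
theorem stmt17 (p k : ℕ) (hp : p.Prime) (hk : 1 ≤ k) :
    ((Ideal.span {(p : ZMod (p ^ k))} : Ideal (ZMod (p ^ k))) : Set (ZMod (p ^ k))).ncard
        = p ^ (k - 1) ∧
    {x : ZMod (p ^ k) | IsUnit x}.ncard = p ^ (k - 1) * (p - 1) ∧
    {x : ZMod (p ^ k) | IsUnit x}.ncard = Nat.totient (p ^ k) ∧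
    ∀ u v : ZMod (p ^ k), u ≠ v →
      ((GUZ (ZMod (p ^ k))).Adj u v ↔
        ((u ∈ Ideal.span {(p : ZMod (p ^ k))} ∧ v ∉ Ideal.span {(p : ZMod (p ^ k))}) ∨
          (u ∉ Ideal.span {(p : ZMod (p ^ k))} ∧ v ∈ Ideal.span {(p : ZMod (p ^ k))}))) := by
  have := Fact.mk hp
  obtain ⟨j, rfl⟩ : ∃ j, k = j + 1 := ⟨k - 1, by omega⟩
  have hunits : Nat.card (ZMod (p ^ (j + 1)))ˣ = p ^ j * (p - 1) := by
    rw [Nat.card_eq_fintype_card, ZMod.card_units_eq_totient, Nat.totient_prime_pow_succ hp]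
  have hcard := ncard_maximalIdeal_add_card_units (R := ZMod (p ^ (j + 1)))
  rw [hunits, Nat.card_zmod] at hcard
  have hpow : p ^ (j + 1) = p ^ j * (p - 1) + p ^ j := by
    rw [← mul_add_one, Nat.sub_add_cancel hp.one_le, pow_succ]
  rw [Nat.add_sub_cancel, ← ZMod.maximalIdeal_prime_pow, Set.ncard_setOf_isUnit, hunits,
    Nat.totient_prime_pow_succ hp]
  exact ⟨by omega, rfl, rfl, fun u v _ => GUZ_adj_iff⟩
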